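/- arXiv:2011.10436 — 4 statements merged into one kernel-verified Lean document; each statement's English description precedes it below -/
import Mathlib

section
/- For every n ≥ 3 and every ℓ ≥ 1, the set agreement valency task on χ^ℓ(σ) is (n−1)-locally solvable in one round: for every simplex τ ∈ χ^ℓ(σ) there exists a coloring c_τ of χ^{ℓ+1}(σ) with values in {0,…,n−1} that is consistent and complete with the set agreement valency map val on χ^ℓ(σ), and such that no simplex of χ(τ) receives n distinct values under c_τ. -/
/-!
Fix a color `j₀`. A vertex `(i, γ)` of `χ^{ℓ+1}(σ)` outputs its own color `i`, unless its view `γ`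
is a full simplex or an interior facet (an `(n-2)`-simplex with carrier `σ`); then it outputs `j₀`,
except that on an interior facet the vertex whose color is the least color of `γ` other than `j₀`
outputs the color missing from `γ`. Singleton views realize `ids τ'` and that leader realizes the
extra color of `carr τ'`, so for every `j₀` the coloring is consistent and complete with `val`.

For locality choose `j₀` so that the facet of `τ` missing `j₀` is interior; this is possible
because `ℓ ≥ 1`, so the top vertex of `τ` already sees every color. In a rainbow simplex of `χ(τ)`
the top vertex sees `τ` and outputs `j₀`. If its own color is `j₀`, the next vertex sees the
interior facet missing `j₀` and outputs `j₀` as well. Otherwise the vertex outputting the top color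
is the leader of an interior facet, and the vertex outputting the leader's color can only be the
leader itself, which outputs a color other than its own.
-/

open scoped Classical

/-- Vertices of the ℓ-th chromatic subdivision of the standard simplex on `Fin n`. -/
def ChromV (n : ℕ) : ℕ → Type
  | 0 => Fin n
  | ℓ + 1 => Fin n × Finset (ChromV n ℓ)

instance chromVDecEq (n : ℕ) : ∀ ℓ, DecidableEq (ChromV n ℓ)
  | 0 => inferInstanceAs (DecidableEq (Fin n))
  | ℓ + 1 =>
    letI := chromVDecEq n ℓ
    inferInstanceAs (DecidableEq (Fin n × Finset (ChromV n ℓ)))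

/-- The color of a vertex of the ℓ-th chromatic subdivision. -/
def chromCol (n : ℕ) : ∀ ℓ, ChromV n ℓ → Fin n
  | 0, v => v
  | _ + 1, v => v.1

/-- `ids γ`: the set of colors of the vertices of a simplex `γ`. -/
def ids {n ℓ : ℕ} (γ : Finset (ChromV n ℓ)) : Finset (Fin n) :=
  γ.image (chromCol n ℓ)

/-- One step of standard chromatic subdivision of a set of (nonempty) simplexes. -/
def subdiv {α : Type} {n : ℕ} (col : α → Fin n) (K : Set (Finset α)) :
    Set (Finset (Fin n × Finset α)) :=
  { s | s.Nonempty ∧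
    (∀ v ∈ s, v.2 ∈ K ∧ v.1 ∈ v.2.image col) ∧
    (∀ u ∈ s, ∀ v ∈ s, u ≠ v → u.1 ≠ v.1) ∧
    (∀ u ∈ s, ∀ v ∈ s, u.2 ⊆ v.2 ∨ v.2 ⊆ u.2) ∧
    (∀ u ∈ s, ∀ v ∈ s, u.1 ∈ v.2.image col → u.2 ⊆ v.2) }

/-- The faces of a simplex `τ`: its nonempty subsets. -/
def facesOf {α : Type} (τ : Finset α) : Set (Finset α) :=
  { s | s.Nonempty ∧ s ⊆ τ }

/-- The ℓ-th chromatic subdivision `χ^ℓ(ρ)` of a face `ρ` of σ,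
as a subcomplex of `χ^ℓ(σ)`. -/
def chromSub (n : ℕ) (ρ : Finset (Fin n)) : ∀ ℓ, Set (Finset (ChromV n ℓ))
  | 0 => facesOf ρ
  | ℓ + 1 => subdiv (chromCol n ℓ) (chromSub n ρ ℓ)

/-- Iterated chromatic subdivision of a subcomplex sitting at level ℓ. -/
def iterSub (n ℓ : ℕ) : ∀ m, Set (Finset (ChromV n ℓ)) → Set (Finset (ChromV n (ℓ + m)))
  | 0, K => K
  | m + 1, K => subdiv (chromCol n (ℓ + m)) (iterSub n ℓ m K)

/-- `χ^m(τ)` for a simplex `τ ∈ χ^ℓ(σ)`: the subcomplex of `χ^{ℓ+m}(σ)` obtained by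
iterated subdivision of `τ` and its faces. -/
def subOf {n ℓ : ℕ} (m : ℕ) (τ : Finset (ChromV n ℓ)) : Set (Finset (ChromV n (ℓ + m))) :=
  iterSub n ℓ m (facesOf τ)

/-- The vertices of a subcomplex. -/
def vertexSet {n ℓ : ℕ} (L : Set (Finset (ChromV n ℓ))) : Set (ChromV n ℓ) :=
  { v | ∃ s ∈ L, v ∈ s }

/-- `c(L)`: the set of values taken by a coloring `c` on the vertices of a subcomplex `L`. -/
def colorSet {n ℓ : ℕ} {β : Type} (c : ChromV n ℓ → β) (L : Set (Finset (ChromV n ℓ))) :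
    Set β :=
  c '' vertexSet L

/-- The carrier of a simplex `γ ∈ χ^ℓ(σ)`: the smallest face `ρ` of σ with `γ ∈ χ^ℓ(ρ)`,
realized as the intersection of all such faces. -/
noncomputable def carr {n ℓ : ℕ} (γ : Finset (ChromV n ℓ)) : Finset (Fin n) :=
  Finset.univ.filter fun i => ∀ ρ : Finset (Fin n), γ ∈ chromSub n ρ ℓ → i ∈ ρ

/-- The set agreement valency map: `val(τ) = ids(τ)` if `|τ| ≤ n-2`, else `carr(τ)`. -/
noncomputable def saVal {n ℓ : ℕ} (τ : Finset (ChromV n ℓ)) : Finset (Fin n) :=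
  if τ.card ≤ n - 2 then ids τ else carr τ

/-- The weak symmetry breaking valency map: `{1}` on simplexes of dimension ≤ n-3,
`{0,1}` otherwise. -/
def wsbVal {n ℓ : ℕ} (τ : Finset (ChromV n ℓ)) : Set (Fin 2) :=
  if τ.card ≤ n - 2 then {1} else Set.univ

/-- The simplicial map on the ℓ-th chromatic subdivision induced functorially by a
map `f` on the colors/vertices of σ. -/
def vmap (n : ℕ) (f : Fin n → Fin n) : ∀ ℓ, ChromV n ℓ → ChromV n ℓ
  | 0, v => f v
  | ℓ + 1, v => (f v.1, v.2.image (vmap n f ℓ))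

/-- The order-preserving bijection between two faces `s` and `t` of σ of the same
cardinality (extended by the identity elsewhere). -/
noncomputable def opBij {n : ℕ} (s t : Finset (Fin n)) (i : Fin n) : Fin n :=
  if h : i ∈ s ∧ s.card = t.card then
    ↑(t.orderIsoOfFin rfl (Fin.cast h.2 ((s.orderIsoOfFin rfl).symm ⟨i, h.1⟩)))
  else i

/-- A coloring of `χ^L(σ)` is symmetric if it is invariant under the order-preserving
simplicial bijections between subdivided faces of σ of the same dimension. -/
def SymmColoring {n L : ℕ} {β : Type} (b : ChromV n L → β) : Prop :=
  ∀ s t : Finset (Fin n), s.Nonempty → t.Nonempty → s ≠ t → s.card = t.card →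
    ∀ v ∈ vertexSet (chromSub n s L), b (vmap n (opBij s t) L v) = b v

/-- Transport of vertices along an equality of levels. -/
def castV (n : ℕ) {a b : ℕ} (h : a = b) : ChromV n a → ChromV n b :=
  fun v => h ▸ v

open Finset

section Subdivision

variable {α : Type} {n : ℕ} {col : α → Fin n} {K : Set (Finset α)}

theorem mem_subdiv_of_subset {s t : Finset (Fin n × Finset α)} (hs : s ∈ subdiv col K)
    (ht : t.Nonempty) (hts : t ⊆ s) : t ∈ subdiv col K := by
  obtain ⟨-, hK, hfst, hchain, hcross⟩ := hs
  exact ⟨ht, fun v hv => hK v (hts hv), fun u hu v hv => hfst u (hts hu) v (hts hv),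
    fun u hu v hv => hchain u (hts hu) v (hts hv), fun u hu v hv => hcross u (hts hu) v (hts hv)⟩

theorem singleton_mem_subdiv {v : Fin n × Finset α} (hK : v.2 ∈ K) (hcol : v.1 ∈ v.2.image col) :
    {v} ∈ subdiv col K := by
  refine ⟨singleton_nonempty v, ?_, ?_, ?_, ?_⟩ <;> simp [hK, mem_image.1 hcol]

theorem injOn_fst_of_mem_subdiv {s : Finset (Fin n × Finset α)} (hs : s ∈ subdiv col K) :
    Set.InjOn Prod.fst (s : Set (Fin n × Finset α)) :=
  fun u hu v hv h => by_contra fun hne => hs.2.2.1 u hu v hv hne h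

theorem exists_top_of_mem_subdiv {s : Finset (Fin n × Finset α)} (hs : s ∈ subdiv col K) :
    ∃ t ∈ s, ∀ u ∈ s, u.2 ⊆ t.2 := by
  obtain ⟨t, ht, hmax⟩ := s.exists_max_image (fun u => u.2.card) hs.1
  refine ⟨t, ht, fun u hu => ?_⟩
  rcases hs.2.2.2.1 u hu t ht with h | h
  · exact h
  · rw [eq_of_subset_of_card_le h (hmax u hu)]

theorem image_fst_subset_of_forall_subset {s : Finset (Fin n × Finset α)}
    (hs : s ∈ subdiv col K) {t : Fin n × Finset α} (ht : ∀ u ∈ s, u.2 ⊆ t.2) :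
    s.image Prod.fst ⊆ t.2.image col := by
  intro x hx
  obtain ⟨u, hu, rfl⟩ := mem_image.1 hx
  exact image_subset_image (ht u hu) (hs.2.1 u hu).2

end Subdivision

section Chromatic

variable {n ℓ : ℕ} {ρ : Finset (Fin n)}

theorem mem_chromSub_of_subset :
    ∀ {ℓ : ℕ} {γ τ : Finset (ChromV n ℓ)}, τ ∈ chromSub n ρ ℓ → γ.Nonempty → γ ⊆ τ →
      γ ∈ chromSub n ρ ℓ
  | 0, _, _, hτ, hγ, hγτ => ⟨hγ, hγτ.trans hτ.2⟩
  | _ + 1, _, _, hτ, hγ, hγτ => mem_subdiv_of_subset hτ hγ hγτ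

theorem ids_subset_of_mem_chromSub :
    ∀ {ℓ : ℕ} {γ : Finset (ChromV n ℓ)}, γ ∈ chromSub n ρ ℓ → ids γ ⊆ ρ
  | 0, _, hγ => fun _ hx => by
    obtain ⟨v, hv, rfl⟩ := mem_image.1 hx
    exact hγ.2 hv
  | _ + 1, _, hγ => fun _ hx => by
    obtain ⟨v, hv, rfl⟩ := mem_image.1 hx
    exact ids_subset_of_mem_chromSub (hγ.2.1 v hv).1 (hγ.2.1 v hv).2

theorem injOn_chromCol_of_mem_chromSub {γ : Finset (ChromV n ℓ)} (hγ : γ ∈ chromSub n ρ ℓ) :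
    Set.InjOn (chromCol n ℓ) γ := by
  cases ℓ with
  | zero => exact fun _ _ _ _ h => h
  | succ ℓ => exact injOn_fst_of_mem_subdiv hγ

theorem card_ids_of_mem_chromSub {γ : Finset (ChromV n ℓ)} (hγ : γ ∈ chromSub n ρ ℓ) :
    (ids γ).card = γ.card :=
  card_image_of_injOn (injOn_chromCol_of_mem_chromSub hγ)

theorem card_le_of_mem_chromSub {γ : Finset (ChromV n ℓ)} (hγ : γ ∈ chromSub n ρ ℓ) :
    γ.card ≤ n := by
  simpa [card_ids_of_mem_chromSub hγ] using card_le_univ (ids γ)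

theorem ids_eq_univ_of_le_card {γ : Finset (ChromV n ℓ)} (hγ : γ ∈ chromSub n ρ ℓ)
    (h : n ≤ γ.card) : ids γ = univ :=
  eq_univ_of_card _ <| by
    rw [card_ids_of_mem_chromSub hγ, Fintype.card_fin]
    exact le_antisymm (card_le_of_mem_chromSub hγ) h

theorem ids_subset_carr (γ : Finset (ChromV n ℓ)) : ids γ ⊆ carr γ := fun _ hi =>
  mem_filter.2 ⟨mem_univ _, fun _ hρ => ids_subset_of_mem_chromSub hρ hi⟩

theorem carr_eq_univ_of_le_card {γ : Finset (ChromV n ℓ)} (hγ : γ ∈ chromSub n ρ ℓ)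
    (h : n ≤ γ.card) : carr γ = univ :=
  univ_subset_iff.1 (ids_eq_univ_of_le_card hγ h ▸ ids_subset_carr γ)

theorem ids_snd_subset_carr {γ : Finset (ChromV n (ℓ + 1))} {v : ChromV n (ℓ + 1)} (hv : v ∈ γ) :
    ids v.2 ⊆ carr γ := fun _ hi =>
  mem_filter.2 ⟨mem_univ _, fun _ hρ => ids_subset_of_mem_chromSub (hρ.2.1 v hv).1 hi⟩

theorem carr_mono {γ τ : Finset (ChromV n ℓ)} (hγ : γ.Nonempty) (hγτ : γ ⊆ τ) :
    carr γ ⊆ carr τ := fun _ hi =>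
  mem_filter.2 ⟨mem_univ _, fun ρ hρ =>
    (mem_filter.1 hi).2 ρ (mem_chromSub_of_subset hρ hγ hγτ)⟩

theorem mem_vertexSet_subOf_one_iff {τ : Finset (ChromV n ℓ)} {v : Fin n × Finset (ChromV n ℓ)} :
    v ∈ vertexSet (subOf 1 τ) ↔ v.2.Nonempty ∧ v.2 ⊆ τ ∧ v.1 ∈ ids v.2 := by
  constructor
  · rintro ⟨s, hs, hv⟩
    exact ⟨(hs.2.1 v hv).1.1, (hs.2.1 v hv).1.2, (hs.2.1 v hv).2⟩
  · rintro ⟨hne, hsub, hcol⟩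
    exact ⟨{v}, singleton_mem_subdiv ⟨hne, hsub⟩ hcol, mem_singleton_self v⟩

theorem card_le_card_ids_of_mem_subOf_one {τ : Finset (ChromV n ℓ)}
    {s : Finset (Fin n × Finset (ChromV n ℓ))} (hs : s ∈ subOf 1 τ) :
    s.card ≤ (ids τ).card := by
  rw [← card_image_of_injOn (injOn_fst_of_mem_subdiv hs)]
  refine card_le_card fun x hx => ?_
  obtain ⟨u, hu, rfl⟩ := mem_image.1 hx
  exact image_subset_image (hs.2.1 u hu).1.2 (hs.2.1 u hu).2

/-- Dropping any color other than that of the top vertex of `τ` keeps the top vertex, whose view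
already contains every color. -/
theorem exists_interior_facet (hn : 2 ≤ n) {τ : Finset (ChromV n (ℓ + 1))}
    (hτ : τ ∈ chromSub n ρ (ℓ + 1)) (hids : ids τ = univ) :
    ∃ j₀ : Fin n, ∀ γ ⊆ τ, ids γ = univ.erase j₀ → carr γ = univ := by
  obtain ⟨t, ht, htop⟩ := exists_top_of_mem_subdiv hτ
  have : Nontrivial (Fin n) := Fin.nontrivial_iff_two_le.2 hn
  obtain ⟨j₀, hj₀⟩ := exists_ne t.1
  refine ⟨j₀, fun γ hγτ hγ => univ_subset_iff.1 ?_⟩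
  have hcol : t.1 ∈ ids γ := hγ ▸ mem_erase.2 ⟨hj₀.symm, mem_univ _⟩
  obtain ⟨w, hw, hwcol⟩ := mem_image.1 hcol
  have hwt : w = t := injOn_chromCol_of_mem_chromSub hτ (hγτ hw) ht hwcol
  calc univ = ids τ := hids.symm
    _ ⊆ ids t.2 := image_fst_subset_of_forall_subset hτ htop
    _ ⊆ carr γ := ids_snd_subset_carr (hwt ▸ hw)

end Chromatic

section Coloring

variable {n ℓ : ℕ} {ρ : Finset (Fin n)} {j₀ : Fin n}

noncomputable def minD (s : Finset (Fin n)) (d : Fin n) : Fin n :=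
  if h : s.Nonempty then s.min' h else d

theorem minD_mem {s : Finset (Fin n)} (h : s.Nonempty) (d : Fin n) : minD s d ∈ s := by
  rw [minD, dif_pos h]
  exact min'_mem s h

def IsInteriorFacet (γ : Finset (ChromV n ℓ)) : Prop :=
  γ.card = n - 1 ∧ carr γ = univ

noncomputable def leaderColor (j₀ : Fin n) (γ : Finset (ChromV n ℓ)) : Fin n :=
  minD ((ids γ).erase j₀) j₀

noncomputable def missingColor (j₀ : Fin n) (γ : Finset (ChromV n ℓ)) : Fin n :=
  minD (ids γ)ᶜ j₀

noncomputable def saColoring (j₀ : Fin n) (v : Fin n × Finset (ChromV n ℓ)) : Fin n :=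
  if IsInteriorFacet v.2 then (if v.1 = leaderColor j₀ v.2 then missingColor j₀ v.2 else j₀)
  else if v.2.card < n then v.1 else j₀

theorem leaderColor_mem (γ : Finset (ChromV n ℓ)) (h : 2 ≤ (ids γ).card) :
    leaderColor j₀ γ ∈ (ids γ).erase j₀ :=
  minD_mem (card_pos.1 (by rw [card_erase_eq_ite]; split_ifs <;> omega)) j₀

theorem missingColor_eq {γ : Finset (ChromV n ℓ)} {x : Fin n} (h : (ids γ)ᶜ = {x}) :
    missingColor j₀ γ = x :=
  mem_singleton.1 (h ▸ minD_mem (h ▸ singleton_nonempty x) j₀)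

theorem saColoring_of_card_lt {v : Fin n × Finset (ChromV n ℓ)} (h : v.2.card < n - 1) :
    saColoring j₀ v = v.1 := by
  rw [saColoring, if_neg fun hI => by have := hI.1; omega, if_pos (by omega)]

theorem saColoring_of_card_eq {v : Fin n × Finset (ChromV n ℓ)} (hn : 0 < n) (h : v.2.card = n) :
    saColoring j₀ v = j₀ := by
  rw [saColoring, if_neg fun hI => by have := hI.1; omega, if_neg (by omega)]

theorem saColoring_of_isInteriorFacet {v : Fin n × Finset (ChromV n ℓ)} (h : IsInteriorFacet v.2) :
    saColoring j₀ v = j₀ ∨ saColoring j₀ v = missingColor j₀ v.2 := by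
  rw [saColoring, if_pos h]
  split_ifs <;> simp

theorem isInteriorFacet_of_saColoring_ne {v : Fin n × Finset (ChromV n ℓ)}
    (h₁ : saColoring j₀ v ≠ v.1) (h₂ : saColoring j₀ v ≠ j₀) :
    IsInteriorFacet v.2 ∧ v.1 = leaderColor j₀ v.2 ∧ saColoring j₀ v = missingColor j₀ v.2 := by
  unfold saColoring at *
  split_ifs at h₁ h₂ ⊢ with hI hl
  · exact ⟨hI, hl, rfl⟩
  all_goals contradiction

theorem saColoring_mem_carr {v : Fin n × Finset (ChromV n ℓ)} (hγ : v.2 ∈ chromSub n ρ ℓ)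
    (hv : v.1 ∈ ids v.2) : saColoring j₀ v ∈ carr v.2 := by
  by_cases hI : IsInteriorFacet v.2
  · simp [hI.2]
  rw [saColoring, if_neg hI]
  split_ifs with hlt
  · exact ids_subset_carr _ hv
  · simp [carr_eq_univ_of_le_card hγ (not_lt.1 hlt)]

theorem saColoring_eq_of_ids_eq_erase {v : Fin n × Finset (ChromV n ℓ)}
    (hγ : v.2 ∈ chromSub n ρ ℓ) (hids : ids v.2 = univ.erase j₀) (hcarr : carr v.2 = univ) :
    saColoring j₀ v = j₀ := by
  have hcard : v.2.card = n - 1 := by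
    rw [← card_ids_of_mem_chromSub hγ, hids, card_erase_of_mem (mem_univ _), card_univ,
      Fintype.card_fin]
  have hmissing : missingColor j₀ v.2 = j₀ :=
    missingColor_eq (by rw [hids, ← compl_singleton, compl_compl])
  rcases saColoring_of_isInteriorFacet (j₀ := j₀) ⟨hcard, hcarr⟩ with h | h
  · exact h
  · exact h.trans hmissing

/-- A vertex colored neither by its own color nor by `j₀` is the leader of an interior facet, and
two such vertices of one simplex see the same facet. -/
theorem eq_of_saColoring_ne {K : Set (Finset (ChromV n ℓ))}
    {s : Finset (Fin n × Finset (ChromV n ℓ))} (hs : s ∈ subdiv (chromCol n ℓ) K)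
    {u w : Fin n × Finset (ChromV n ℓ)} (hu : u ∈ s) (hw : w ∈ s)
    (hu₁ : saColoring j₀ u ≠ u.1) (hu₂ : saColoring j₀ u ≠ j₀)
    (hw₁ : saColoring j₀ w ≠ w.1) (hw₂ : saColoring j₀ w ≠ j₀) : u = w := by
  obtain ⟨hIu, hlu, -⟩ := isInteriorFacet_of_saColoring_ne hu₁ hu₂
  obtain ⟨hIw, hlw, -⟩ := isInteriorFacet_of_saColoring_ne hw₁ hw₂
  have hcard : u.2.card = w.2.card := hIu.1.trans hIw.1.symm
  have hsnd : u.2 = w.2 := by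
    rcases hs.2.2.2.1 u hu w hw with h | h
    · exact eq_of_subset_of_card_le h hcard.ge
    · exact (eq_of_subset_of_card_le h hcard.le).symm
  exact injOn_fst_of_mem_subdiv hs hu hw (by rw [hlu, hlw, hsnd])

end Coloring

section Solvability

variable {n ℓ : ℕ} {ρ : Finset (Fin n)} {j₀ : Fin n} {τ : Finset (ChromV n ℓ)}

theorem saColoring_mem_saVal (hτ : τ ∈ chromSub n ρ ℓ) {v : Fin n × Finset (ChromV n ℓ)}
    (hv : v ∈ vertexSet (subOf 1 τ)) : saColoring j₀ v ∈ saVal τ := by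
  obtain ⟨hne, hsub, hcol⟩ := mem_vertexSet_subOf_one_iff.1 hv
  have hcard := card_le_card hsub
  unfold saVal
  split_ifs with hsmall
  · rw [saColoring_of_card_lt (by have := hne.card_pos; omega)]
    exact image_subset_image hsub hcol
  · exact carr_mono hne hsub (saColoring_mem_carr (mem_chromSub_of_subset hτ hne hsub) hcol)

theorem isInteriorFacet_of_mem_saVal (hτ : τ ∈ chromSub n ρ ℓ) {x : Fin n}
    (hx : x ∈ saVal τ) (hxτ : x ∉ ids τ) : IsInteriorFacet τ ∧ (ids τ)ᶜ = {x} := by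
  have hbig : ¬ τ.card ≤ n - 2 := fun h => hxτ (by rwa [saVal, if_pos h] at hx)
  have hxc : x ∈ carr τ := by rwa [saVal, if_neg hbig] at hx
  have hids : (ids τ).card < n := by
    simpa using (card_lt_iff_ne_univ (ids τ)).2 fun h => hxτ (h ▸ mem_univ x)
  rw [card_ids_of_mem_chromSub hτ] at hids
  have hcard : τ.card = n - 1 := by omega
  have hcompl_card : (ids τ)ᶜ.card = 1 := by
    rw [card_compl, Fintype.card_fin, card_ids_of_mem_chromSub hτ]
    omega
  refine ⟨⟨hcard, eq_univ_of_card _ (le_antisymm (card_le_univ _) ?_)⟩, ?_⟩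
  · have := card_lt_card (ssubset_of_subset_of_ne (ids_subset_carr τ) fun h => hxτ (h ▸ hxc))
    rw [card_ids_of_mem_chromSub hτ] at this
    rw [Fintype.card_fin]
    omega
  · obtain ⟨y, hy⟩ := card_eq_one.1 hcompl_card
    rw [hy, mem_singleton.1 (hy ▸ mem_compl.2 hxτ : x ∈ ({y} : Finset (Fin n)))]

theorem colorSet_saColoring_subOf_one (hn : 3 ≤ n) (hτ : τ ∈ chromSub n ρ ℓ) :
    colorSet (saColoring j₀) (subOf 1 τ) = ↑(saVal τ) := by
  refine Set.Subset.antisymm (Set.image_subset_iff.2 fun v hv => saColoring_mem_saVal hτ hv) ?_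
  intro x hx
  by_cases hxτ : x ∈ ids τ
  · obtain ⟨w, hw, rfl⟩ := mem_image.1 hxτ
    refine ⟨(chromCol n ℓ w, {w}), mem_vertexSet_subOf_one_iff.2
      ⟨singleton_nonempty w, singleton_subset_iff.2 hw, by simp [ids]⟩, ?_⟩
    exact saColoring_of_card_lt (by simp only [card_singleton]; omega)
  · obtain ⟨hI, hcompl⟩ := isInteriorFacet_of_mem_saVal hτ hx hxτ
    have hleader := leaderColor_mem (j₀ := j₀) τ (by rw [card_ids_of_mem_chromSub hτ, hI.1]; omega)
    refine ⟨(leaderColor j₀ τ, τ), mem_vertexSet_subOf_one_iff.2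
      ⟨card_pos.1 (by rw [hI.1]; omega), Subset.refl τ, (mem_erase.1 hleader).2⟩, ?_⟩
    rw [saColoring, if_pos hI, if_pos rfl, missingColor_eq hcompl]

section Rainbow

variable {s : Finset (Fin n × Finset (ChromV n ℓ))}

theorem exists_top_saColoring_eq (hτ : τ ∈ chromSub n ρ ℓ) (hs : s ∈ subOf 1 τ)
    (hcard : n ≤ s.card)
    (hinj : Set.InjOn (saColoring j₀) (s : Set (Fin n × Finset (ChromV n ℓ)))) :
    ∃ t ∈ s, saColoring j₀ t = j₀ ∧ ∀ u ∈ s, u ≠ t → saColoring j₀ u ≠ j₀ ∧ t.1 ∉ ids u.2 := by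
  obtain ⟨t, ht, htop⟩ := exists_top_of_mem_subdiv hs
  have hsτ := card_le_card_ids_of_mem_subOf_one hs
  rw [card_ids_of_mem_chromSub hτ] at hsτ
  have hτn : τ.card = n := le_antisymm (card_le_of_mem_chromSub hτ) (hcard.trans hsτ)
  have hc_τ : ∀ u ∈ s, τ ⊆ u.2 → saColoring j₀ u = j₀ := fun u hu h =>
    saColoring_of_card_eq (by have := hs.1.card_pos; omega)
      (by rw [(hs.2.1 u hu).1.2.antisymm h, hτn])
  have htτ : τ ⊆ t.2 := by
    have hcolors := card_le_card (image_fst_subset_of_forall_subset hs htop)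
    rw [card_image_of_injOn (injOn_fst_of_mem_subdiv hs)] at hcolors
    refine (eq_of_subset_of_card_le (hs.2.1 t ht).1.2 ?_).ge
    rw [hτn]
    exact hcard.trans (hcolors.trans card_image_le)
  have hct := hc_τ t ht htτ
  refine ⟨t, ht, hct, fun u hu hne => ?_⟩
  have hcu : saColoring j₀ u ≠ j₀ := fun h => hne (hinj hu ht (h.trans hct.symm))
  exact ⟨hcu, fun hmem => hcu (hc_τ u hu (htτ.trans (hs.2.2.2.2 t ht u hu hmem)))⟩

theorem exists_ne_saColoring_eq_of_not_mem_ids (hn : 2 ≤ n) (hτ : τ ∈ chromSub n ρ ℓ)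
    (hj₀ : ∀ γ ⊆ τ, ids γ = univ.erase j₀ → carr γ = univ) (hs : s ∈ subOf 1 τ)
    (hcard : n ≤ s.card) {t : Fin n × Finset (ChromV n ℓ)} (ht : t ∈ s)
    (htop : ∀ u ∈ s, u ≠ t → j₀ ∉ ids u.2) :
    ∃ u ∈ s, u ≠ t ∧ saColoring j₀ u = j₀ := by
  have hne : (s.erase t).Nonempty := by rw [← card_pos, card_erase_of_mem ht]; omega
  have hs' := mem_subdiv_of_subset hs hne (erase_subset t s)
  obtain ⟨u, hu, hutop⟩ := exists_top_of_mem_subdiv hs'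
  obtain ⟨hut, hus⟩ := mem_erase.1 hu
  have hids : ids u.2 = univ.erase j₀ := by
    refine eq_of_subset_of_card_le (fun x hx => mem_erase.2 ⟨?_, mem_univ x⟩) ?_
    · rintro rfl
      exact htop u hus hut hx
    · have hcolors := card_le_card (image_fst_subset_of_forall_subset hs' hutop)
      rw [card_image_of_injOn (injOn_fst_of_mem_subdiv hs'), card_erase_of_mem ht] at hcolors
      rw [card_erase_of_mem (mem_univ _), card_univ, Fintype.card_fin]
      exact hcolors.trans' (by omega)
  have hu_mem := mem_chromSub_of_subset hτ (hs.2.1 u hus).1.1 (hs.2.1 u hus).1.2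
  exact ⟨u, hus, hut, saColoring_eq_of_ids_eq_erase hu_mem hids (hj₀ u.2 (hs.2.1 u hus).1.2 hids)⟩

theorem image_saColoring_ne_univ_of_top_fst_ne (hn : 3 ≤ n) (hτ : τ ∈ chromSub n ρ ℓ)
    (hs : s ∈ subOf 1 τ) {t : Fin n × Finset (ChromV n ℓ)} (ht : t ∈ s)
    (hct : saColoring j₀ t = j₀)
    (htop : ∀ u ∈ s, u ≠ t → saColoring j₀ u ≠ j₀ ∧ t.1 ∉ ids u.2) (hj : t.1 ≠ j₀) :
    s.image (saColoring j₀) ≠ univ := by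
  intro hsurj
  obtain ⟨u, hu, hcu⟩ := mem_image.1 (hsurj ▸ mem_univ t.1 : t.1 ∈ s.image (saColoring j₀))
  have hut : u ≠ t := by
    rintro rfl
    exact hj (hcu.symm.trans hct)
  have hcu₁ : saColoring j₀ u ≠ u.1 := fun h => (htop u hu hut).2 (hcu ▸ h ▸ (hs.2.1 u hu).2)
  have hcu₂ := (htop u hu hut).1
  obtain ⟨hI, hleader, -⟩ := isInteriorFacet_of_saColoring_ne hcu₁ hcu₂
  have hu₁ : u.1 ≠ j₀ := by
    have hu_mem := mem_chromSub_of_subset hτ (hs.2.1 u hu).1.1 (hs.2.1 u hu).1.2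
    rw [hleader]
    refine (mem_erase.1 (leaderColor_mem u.2 ?_)).1
    rw [card_ids_of_mem_chromSub hu_mem, hI.1]
    omega
  obtain ⟨w, hw, hcw⟩ := mem_image.1 (hsurj ▸ mem_univ u.1 : u.1 ∈ s.image (saColoring j₀))
  have hwu : w = u := by
    by_cases hw₁ : saColoring j₀ w = w.1
    · exact injOn_fst_of_mem_subdiv hs hw hu (hw₁.symm.trans hcw)
    · have hwt : w ≠ t := by
        rintro rfl
        exact hu₁ (hcw.symm.trans hct)
      exact eq_of_saColoring_ne hs hw hu hw₁ (htop w hw hwt).1 hcu₁ hcu₂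
  exact hcu₁ (hwu ▸ hcw)

theorem card_image_saColoring_lt (hn : 3 ≤ n) (hτ : τ ∈ chromSub n ρ ℓ)
    (hj₀ : ∀ γ ⊆ τ, ids γ = univ.erase j₀ → carr γ = univ) (hs : s ∈ subOf 1 τ) :
    (s.image (saColoring j₀)).card < n := by
  by_contra! hrainbow
  have hsτ := card_le_card_ids_of_mem_subOf_one hs
  have hτn : (ids τ).card ≤ n := by simpa using card_le_univ (ids τ)
  have hcs : (s.image (saColoring j₀)).card ≤ s.card := card_image_le
  obtain ⟨t, ht, hct, htop⟩ :=
    exists_top_saColoring_eq (j₀ := j₀) hτ hs (by omega) (card_image_iff.1 (by omega))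
  rcases eq_or_ne t.1 j₀ with hj | hj
  · obtain ⟨u, hu, hut, hcu⟩ := exists_ne_saColoring_eq_of_not_mem_ids (by omega) hτ hj₀ hs
      (by omega) ht fun u hu hne => hj ▸ (htop u hu hne).2
    exact (htop u hu hut).1 hcu
  · exact image_saColoring_ne_univ_of_top_fst_ne hn hτ hs ht hct htop hj
      (eq_univ_of_card _ (by simp only [Fintype.card_fin]; omega))

end Rainbow

end Solvability

/-- For every n ≥ 3 and ℓ ≥ 1, the set agreement valency task on χ^ℓ(σ)
is (n-1)-locally solvable in one round. -/
theorem set_agreement_valency_task_locally_solvable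
    (n ℓ : ℕ) (hn : 3 ≤ n) (hℓ : 1 ≤ ℓ)
    (τ : Finset (ChromV n ℓ)) (hτ : τ ∈ chromSub n Finset.univ ℓ) :
    ∃ c : ChromV n (ℓ + 1) → Fin n,
      (∀ τ' ∈ chromSub n Finset.univ ℓ, colorSet c (subOf 1 τ') ⊆ ↑(saVal τ')) ∧
      (∀ τ' ∈ chromSub n Finset.univ ℓ, colorSet c (subOf 1 τ') = ↑(saVal τ')) ∧
      (∀ s ∈ subOf 1 τ, (s.image c).card < n) := by
  obtain ⟨j₀, hlocal⟩ : ∃ j₀ : Fin n, ∀ s ∈ subOf 1 τ, (s.image (saColoring j₀)).card < n := by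
    by_cases hids : ids τ = univ
    · obtain ⟨L, rfl⟩ := Nat.exists_eq_add_of_le' hℓ
      obtain ⟨j₀, hj₀⟩ := exists_interior_facet (by omega) hτ hids
      exact ⟨j₀, fun s hs => card_image_saColoring_lt hn hτ hj₀ hs⟩
    · refine ⟨⟨0, by omega⟩, fun s hs => ?_⟩
      calc (s.image _).card ≤ s.card := card_image_le
        _ ≤ (ids τ).card := card_le_card_ids_of_mem_subOf_one hs
        _ < n := by simpa using (card_lt_iff_ne_univ _).2 hids
  exact ⟨saColoring j₀, fun τ' hτ' => (colorSet_saColoring_subOf_one (j₀ := j₀) hn hτ').subset,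
    fun τ' hτ' => colorSet_saColoring_subOf_one (j₀ := j₀) hn hτ', hlocal⟩
end

section
/- For every n ≥ 3 and every chosen (n−2)-dimensional face ρ″ of σ, there exists a coloring c of χ(σ) with values in {0,…,n−1} such that: (1) for every face ρ′ of σ with dim(ρ′) ≤ n−3, c(χ(ρ′)) = ρ′; (2) c(χ(ρ″)) = ρ″, and c(χ(ρ′)) = {0,…,n−1} for every (n−2)-dimensional face ρ′ of σ with ρ′ ≠ ρ″; (3) c(χ(σ)) = {0,…,n−1} and no (n−1)-simplex of χ(σ) receives n distinct values under c. -/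
open scoped Classical

/-! Color a vertex `(i, τ)` of `χ(σ)` by `i`, with two exceptions: fixing `k₀ ∈ ρ''`, vertices of
color `k₀` and vertices whose carrier contains `σ \ {k₀}` get `k₀`; and, with `z` the vertex
opposite `ρ''`, the vertex of color `z` on a facet `σ \ {k}` gets `k`. Faces of dimension `≤ n-3`
and `ρ''` then only see the identity coloring, while every other facet picks up its missing color
at `(z, σ \ {k})`. In a top simplex of `χ(σ)`, the vertex of color `k₀` and the vertex of largest
carrier among the others both get `k₀`, so no top simplex is rainbow. -/

namespace ChromaticSubdivision

open Finset

variable {n : ℕ}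

lemma mem_chromSub_one {ρ : Finset (Fin n)} {s : Finset (Fin n × Finset (Fin n))} :
    s ∈ chromSub n ρ 1 ↔ s.Nonempty ∧ (∀ v ∈ s, v.1 ∈ v.2 ∧ v.2 ⊆ ρ) ∧
      (∀ u ∈ s, ∀ v ∈ s, u ≠ v → u.1 ≠ v.1) ∧
      (∀ u ∈ s, ∀ v ∈ s, u.2 ⊆ v.2 ∨ v.2 ⊆ u.2) ∧
      (∀ u ∈ s, ∀ v ∈ s, u.1 ∈ v.2 → u.2 ⊆ v.2) := by
  change s.Nonempty ∧ (∀ v ∈ s, (v.2.Nonempty ∧ v.2 ⊆ ρ) ∧ v.1 ∈ v.2.image id) ∧ _ ∧ _ ∧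
    (∀ u ∈ s, ∀ v ∈ s, u.1 ∈ v.2.image id → u.2 ⊆ v.2) ↔ _
  simp only [image_id]
  refine and_congr_right fun _ => and_congr_left fun _ => forall₂_congr fun v _ => ?_
  exact ⟨fun h => ⟨h.2, h.1.2⟩, fun h => ⟨⟨⟨_, h.1⟩, h.2⟩, h.1⟩⟩

lemma mem_vertexSet_chromSub_one {ρ : Finset (Fin n)} {v : Fin n × Finset (Fin n)} :
    v ∈ vertexSet (chromSub n ρ 1) ↔ v.1 ∈ v.2 ∧ v.2 ⊆ ρ := by
  refine ⟨fun ⟨s, hs, hv⟩ => (mem_chromSub_one.mp hs).2.1 v hv, fun h => ?_⟩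
  refine ⟨{v}, mem_chromSub_one.mpr ⟨singleton_nonempty v, ?_, ?_, ?_, ?_⟩,
    mem_singleton_self v⟩ <;> intro u hu <;> obtain rfl := mem_singleton.mp hu
  exacts [h, fun w hw hne => absurd (mem_singleton.mp hw).symm hne,
    fun w hw => Or.inl (mem_singleton.mp hw ▸ subset_rfl),
    fun w hw _ => mem_singleton.mp hw ▸ subset_rfl]

lemma coe_subset_colorSet_chromSub_one {c : ChromV n 1 → Fin n} {ρ : Finset (Fin n)}
    (hc : ∀ j ∈ ρ, c (j, {j}) = j) : ↑ρ ⊆ colorSet c (chromSub n ρ 1) := fun j hj =>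
  ⟨(j, {j}), mem_vertexSet_chromSub_one.mpr ⟨mem_singleton_self j, singleton_subset_iff.mpr hj⟩,
    hc j hj⟩

lemma colorSet_chromSub_one_of_forall {c : ChromV n 1 → Fin n} {ρ : Finset (Fin n)}
    (hc : ∀ i τ, i ∈ τ → τ ⊆ ρ → c (i, τ) = i) :
    colorSet c (chromSub n ρ 1) = ρ := by
  refine Set.Subset.antisymm ?_ ?_
  · rintro _ ⟨⟨i, τ⟩, hv, rfl⟩
    obtain ⟨hi, hτ⟩ := mem_vertexSet_chromSub_one.mp hv
    rw [hc i τ hi hτ]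
    exact hτ hi
  · exact coe_subset_colorSet_chromSub_one fun j hj =>
      hc j {j} (mem_singleton_self j) (singleton_subset_iff.mpr hj)

lemma exists_mem_fst_eq_of_card_eq {ρ : Finset (Fin n)} {s : Finset (Fin n × Finset (Fin n))}
    (hs : s ∈ chromSub n ρ 1) (hcard : s.card = n) (j : Fin n) : ∃ v ∈ s, v.1 = j := by
  have hinj : Set.InjOn Prod.fst (s : Set (Fin n × Finset (Fin n))) := fun u hu v hv h =>
    by_contra fun hne => (mem_chromSub_one.mp hs).2.2.1 u hu v hv hne h
  have himage : s.image Prod.fst = univ :=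
    eq_univ_of_card _ (by rw [card_image_of_injOn hinj, hcard, Fintype.card_fin])
  exact mem_image.mp (by rw [himage]; exact mem_univ j)

lemma not_injOn_of_eq_on_color_of_eq_on_large_carriers {β : Type} {c : Fin n × Finset (Fin n) → β}
    {k₀ : Fin n} {b : β} (hn : 2 ≤ n) (hcolor : ∀ v, v.1 = k₀ → c v = b)
    (hlarge : ∀ v, v.2ᶜ ⊆ {k₀} → c v = b) {ρ : Finset (Fin n)}
    {s : Finset (Fin n × Finset (Fin n))} (hs : s ∈ chromSub n ρ 1) (hcard : s.card = n) :
    ¬ Set.InjOn c s := by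
  obtain ⟨-, hvert, -, hchain, -⟩ := mem_chromSub_one.mp hs
  obtain ⟨w, hw, hwk₀⟩ := exists_mem_fst_eq_of_card_eq hs hcard k₀
  have hothers : (s.filter (·.1 ≠ k₀)).Nonempty := by
    have := Fin.nontrivial_iff_two_le.mpr hn
    obtain ⟨j, hj⟩ := exists_ne k₀
    obtain ⟨v, hv, rfl⟩ := exists_mem_fst_eq_of_card_eq hs hcard j
    exact ⟨v, mem_filter.mpr ⟨hv, hj⟩⟩
  obtain ⟨u, hu, hmax⟩ := exists_max_image _ (fun v => v.2.card) hothers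
  rw [mem_filter] at hu
  have hu_large : u.2ᶜ ⊆ {k₀} := by
    intro j hj
    by_contra hjk₀
    obtain ⟨v, hv, rfl⟩ := exists_mem_fst_eq_of_card_eq hs hcard j
    have hvu : v.2 ⊆ u.2 := (hchain v hv u hu.1).elim id fun h =>
      (eq_of_subset_of_card_le h (hmax v (mem_filter.mpr ⟨hv, by simpa using hjk₀⟩))).superset
    exact mem_compl.mp hj (hvu (hvert v hv).1)
  intro hinj
  have huw : u = w := hinj hu.1 hw ((hlarge u hu_large).trans (hcolor w hwk₀).symm)
  exact hu.2 (huw ▸ hwk₀)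

noncomputable def chosenFaceColoring (z k₀ : Fin n) (v : Fin n × Finset (Fin n)) : Fin n :=
  if v.1 = k₀ ∨ v.2ᶜ ⊆ {k₀} then k₀
  else if h : v.1 = z ∧ ∃ k, v.2ᶜ = {k} then h.2.choose
  else v.1

section chosenFaceColoring

variable {z k₀ : Fin n}

lemma chosenFaceColoring_of_fst_eq {v : Fin n × Finset (Fin n)} (hv : v.1 = k₀) :
    chosenFaceColoring z k₀ v = k₀ :=
  if_pos (Or.inl hv)

lemma chosenFaceColoring_of_compl_subset {v : Fin n × Finset (Fin n)} (hv : v.2ᶜ ⊆ {k₀}) :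
    chosenFaceColoring z k₀ v = k₀ :=
  if_pos (Or.inr hv)

lemma chosenFaceColoring_of_compl_eq (hk₀ : k₀ ≠ z) {τ : Finset (Fin n)} {k : Fin n}
    (hτ : τᶜ = {k}) : chosenFaceColoring z k₀ (z, τ) = k := by
  by_cases hk : k = k₀
  · exact hk ▸ chosenFaceColoring_of_compl_subset hτ.subset
  have hex : ∃ k, τᶜ = {k} := ⟨k, hτ⟩
  rw [chosenFaceColoring, if_neg (by simp [hk₀.symm, hτ, hk]), dif_pos ⟨rfl, hex⟩]
  exact singleton_inj.mp (hex.choose_spec.symm.trans hτ)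

lemma chosenFaceColoring_eq_fst {v : Fin n × Finset (Fin n)} (h₀ : ¬ v.2ᶜ ⊆ {k₀})
    (hz : v.1 = z → ∀ k, v.2ᶜ ≠ {k}) : chosenFaceColoring z k₀ v = v.1 := by
  unfold chosenFaceColoring
  split_ifs with h h'
  · exact (h.resolve_right h₀).symm
  · exact absurd h'.2.choose_spec (hz h'.1 _)
  · rfl

lemma chosenFaceColoring_of_two_le_card_compl {v : Fin n × Finset (Fin n)}
    (hv : 2 ≤ v.2ᶜ.card) : chosenFaceColoring z k₀ v = v.1 := by
  have hsmall : ∀ k, ¬ v.2ᶜ ⊆ {k} := fun k h => by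
    have := card_le_card h
    rw [card_singleton] at this
    omega
  exact chosenFaceColoring_eq_fst (hsmall k₀) fun _ k h => hsmall k h.subset

lemma chosenFaceColoring_singleton (hn : 3 ≤ n) (j : Fin n) :
    chosenFaceColoring z k₀ (j, {j}) = j :=
  chosenFaceColoring_of_two_le_card_compl (by simp [card_compl]; omega)

lemma chosenFaceColoring_of_notMem (hk₀ : k₀ ≠ z) {v : Fin n × Finset (Fin n)} (hv : v.1 ∈ v.2)
    (hz : z ∉ v.2) : chosenFaceColoring z k₀ v = v.1 :=
  chosenFaceColoring_eq_fst (fun h => hk₀.symm (mem_singleton.mp (h (mem_compl.mpr hz))))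
    fun h => absurd (h ▸ hv) hz

lemma colorSet_chosenFaceColoring_of_compl_eq (hn : 3 ≤ n) (hk₀ : k₀ ≠ z) {ρ : Finset (Fin n)}
    {k : Fin n} (hρ : ρᶜ = {k}) (hz : z ∈ ρ) :
    colorSet (chosenFaceColoring z k₀) (chromSub n ρ 1) = Set.univ := by
  refine Set.eq_univ_of_forall fun j => ?_
  by_cases hj : j ∈ ρ
  · exact coe_subset_colorSet_chromSub_one (fun j _ => chosenFaceColoring_singleton hn j) hj
  · obtain rfl : j = k := by simpa [hρ] using mem_compl.mpr hj
    exact ⟨(z, ρ), mem_vertexSet_chromSub_one.mpr ⟨hz, subset_rfl⟩,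
      chosenFaceColoring_of_compl_eq hk₀ hρ⟩

end chosenFaceColoring

end ChromaticSubdivision

open ChromaticSubdivision Finset in
/-- Lemma on colorings of the first chromatic subdivision, case (2.b),
with a chosen (n-2)-dimensional face ρ''. -/
theorem exists_coloring_chromSub_one_sa_chosen_face
    (n : ℕ) (hn : 3 ≤ n) (ρ'' : Finset (Fin n)) (hρ'' : ρ''.card = n - 1) :
    ∃ c : ChromV n 1 → Fin n,
      (∀ ρ' : Finset (Fin n), ρ'.Nonempty → ρ'.card ≤ n - 2 →
        colorSet c (chromSub n ρ' 1) = ↑ρ') ∧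
      colorSet c (chromSub n ρ'' 1) = ↑ρ'' ∧
      (∀ ρ' : Finset (Fin n), ρ'.card = n - 1 → ρ' ≠ ρ'' →
        colorSet c (chromSub n ρ' 1) = Set.univ) ∧
      colorSet c (chromSub n Finset.univ 1) = Set.univ ∧
      (∀ s ∈ chromSub n Finset.univ 1, s.card = n → (s.image c).card < n) := by
  obtain ⟨z, hz⟩ : ∃ z, ρ''ᶜ = {z} := card_eq_one.mp (by simp [card_compl, hρ'']; omega)
  have hzρ'' : z ∉ ρ'' := mem_compl.mp (hz ▸ mem_singleton_self z)
  obtain ⟨k₀, hk₀⟩ : ρ''.Nonempty := card_pos.mp (by omega)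
  have hk₀z : k₀ ≠ z := fun h => hzρ'' (h ▸ hk₀)
  refine ⟨chosenFaceColoring z k₀, fun ρ' _ hρ' => ?_, ?_, fun ρ' hρ' hne => ?_, ?_,
    fun s hs hcard => ?_⟩
  · exact colorSet_chromSub_one_of_forall fun i τ _ hτ =>
      chosenFaceColoring_of_two_le_card_compl (by have := card_le_card hτ; simp [card_compl]; omega)
  · exact colorSet_chromSub_one_of_forall fun i τ hi hτ =>
      chosenFaceColoring_of_notMem hk₀z hi fun h => hzρ'' (hτ h)
  · obtain ⟨k, hk⟩ := card_eq_one.mp (by simp [card_compl, hρ']; omega : ρ'ᶜ.card = 1)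
    refine colorSet_chosenFaceColoring_of_compl_eq hn hk₀z hk (by_contra fun hzρ' => hne ?_)
    refine eq_of_subset_of_card_le (fun x hx => ?_) (by omega)
    rw [← notMem_compl, hz, mem_singleton]
    exact fun hxz => hzρ' (hxz ▸ hx)
  · simpa using coe_subset_colorSet_chromSub_one (ρ := univ) fun j _ =>
      chosenFaceColoring_singleton hn j
  · refine lt_of_le_of_ne (card_image_le.trans_eq hcard) fun himage => ?_
    exact not_injOn_of_eq_on_color_of_eq_on_large_carriers (by omega)
      (fun _ => chosenFaceColoring_of_fst_eq) (fun _ => chosenFaceColoring_of_compl_subset) hs hcard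
      (card_image_iff.mp (himage.trans hcard.symm))
end

section
/- For every n ≥ 3 there exists a coloring b of χ(σ) with values in {0,1} such that: (1) for every face ρ′ of σ with dim(ρ′) ≤ n−3, b(χ(ρ′)) = {1}; (2) for every (n−2)-dimensional face ρ′ of σ, b(χ(ρ′)) = {0,1}; (3) b(χ(σ)) = {0,1} and no (n−1)-simplex of χ(σ) is b-monochromatic (i.e., no (n−1)-simplex has all its vertices assigned the same value by b). -/
open scoped Classical

/-!
Fix a color `c` and give a vertex `(i, τ)` of `χ(σ)` the value `0` exactly when `i ≠ c` and
`|τ| ≥ n - 1`. Faces of `σ` of dimension at most `n - 3` only carry vertices with `|τ| ≤ n - 2`,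
hence only the value `1`. A face `ρ'` of dimension `n - 2` carries the vertices `(i, {i})`, of
value `1`, and `(i, ρ')` with `i ≠ c`, of value `0`. In a facet of `χ(σ)` the vertex of color `c`
has value `1`; the carriers of the other `n - 1` vertices form a chain and each contains its own
color, so the largest of them has at least `n - 1` elements and its vertex has value `0`.
-/

-- Lets `ChromV n 0` and `Fin n` unify, so that vertices of `χ(σ)` are pairs `(i, τ)` with `τ ⊆ σ`.
attribute [reducible] ChromV

section ChromSubOne

variable {n : ℕ}

lemma mem_chromSub_one {ρ : Finset (Fin n)} {s : Finset (ChromV n 1)} :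
    s ∈ chromSub n ρ 1 ↔ s.Nonempty ∧
      (∀ v ∈ s, (v.2.Nonempty ∧ v.2 ⊆ ρ) ∧ v.1 ∈ v.2) ∧
      (∀ u ∈ s, ∀ v ∈ s, u ≠ v → u.1 ≠ v.1) ∧
      (∀ u ∈ s, ∀ v ∈ s, u.2 ⊆ v.2 ∨ v.2 ⊆ u.2) ∧
      (∀ u ∈ s, ∀ v ∈ s, u.1 ∈ v.2 → u.2 ⊆ v.2) := by
  simp only [chromSub, subdiv, facesOf, Set.mem_ofPred_eq, show chromCol n 0 = id from rfl,
    Finset.image_id]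

lemma mem_vertexSet_chromSub_one {ρ : Finset (Fin n)} {v : ChromV n 1} :
    v ∈ vertexSet (chromSub n ρ 1) ↔ v.1 ∈ v.2 ∧ v.2 ⊆ ρ := by
  constructor
  · rintro ⟨s, hs, hv⟩
    obtain ⟨⟨-, hsub⟩, hmem⟩ := (mem_chromSub_one.1 hs).2.1 v hv
    exact ⟨hmem, hsub⟩
  · rintro ⟨hmem, hsub⟩
    refine ⟨{v}, mem_chromSub_one.2 ?_, Finset.mem_singleton_self v⟩
    simp_all [Finset.nonempty_of_ne_empty, Finset.ne_empty_of_mem hmem]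

lemma exists_image_fst_subset_snd_of_mem_chromSub_one {ρ : Finset (Fin n)}
    {s t : Finset (ChromV n 1)}
    (hs : s ∈ chromSub n ρ 1) (hts : t ⊆ s) (ht : t.Nonempty) :
    ∃ w ∈ t, t.image Prod.fst ⊆ w.2 := by
  obtain ⟨-, hvert, -, hchain, -⟩ := mem_chromSub_one.1 hs
  obtain ⟨w, hw, hmax⟩ := t.exists_max_image (fun v => v.2.card) ht
  refine ⟨w, hw, Finset.image_subset_iff.2 fun v hv => ?_⟩
  have hvw : v.2 ⊆ w.2 := (hchain v (hts hv) w (hts hw)).elim id fun hwv =>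
    (Finset.eq_of_subset_of_card_le hwv (hmax v hv)).ge
  exact hvw (hvert v (hts hv)).2

lemma image_fst_eq_univ_of_mem_chromSub_one {ρ : Finset (Fin n)} {s : Finset (ChromV n 1)}
    (hs : s ∈ chromSub n ρ 1) (hcard : s.card = n) : s.image Prod.fst = Finset.univ := by
  obtain ⟨-, -, hdist, -, -⟩ := mem_chromSub_one.1 hs
  refine Finset.eq_univ_of_card _ ?_
  rw [Finset.card_image_of_injOn fun u hu v hv huv => not_imp_not.1 (hdist u hu v hv) huv,
    hcard, Fintype.card_fin]

def pivotColoring (c : Fin n) (v : ChromV n 1) : Fin 2 :=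
  if v.1 = c ∨ v.2.card ≤ n - 2 then 1 else 0

variable {c : Fin n}

lemma pivotColoring_of_fst_eq {v : ChromV n 1} (h : v.1 = c) : pivotColoring c v = 1 :=
  if_pos (Or.inl h)

lemma pivotColoring_of_card_le {v : ChromV n 1} (h : v.2.card ≤ n - 2) : pivotColoring c v = 1 :=
  if_pos (Or.inr h)

lemma pivotColoring_of_lt_card {v : ChromV n 1} (hc : v.1 ≠ c) (h : n - 2 < v.2.card) :
    pivotColoring c v = 0 :=
  if_neg (by omega)

lemma colorSet_pivotColoring_of_card_le {ρ : Finset (Fin n)} (hne : ρ.Nonempty)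
    (hρ : ρ.card ≤ n - 2) : colorSet (pivotColoring c) (chromSub n ρ 1) = {1} := by
  have hconst : Set.EqOn (pivotColoring c) (fun _ => 1) (vertexSet (chromSub n ρ 1)) :=
    fun v hv => pivotColoring_of_card_le
      ((Finset.card_le_card (mem_vertexSet_chromSub_one.1 hv).2).trans hρ)
  obtain ⟨i, hi⟩ := hne
  have hvert : ((i, {i}) : ChromV n 1) ∈ vertexSet (chromSub n ρ 1) :=
    mem_vertexSet_chromSub_one.2 ⟨Finset.mem_singleton_self i, Finset.singleton_subset_iff.2 hi⟩
  rw [colorSet, hconst.image_eq, Set.Nonempty.image_const ⟨_, hvert⟩]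

lemma colorSet_pivotColoring_of_le_card (hn : 3 ≤ n) {ρ : Finset (Fin n)}
    (hρ : n - 1 ≤ ρ.card) : colorSet (pivotColoring c) (chromSub n ρ 1) = Set.univ := by
  obtain ⟨i, hi, hic⟩ := Finset.exists_mem_ne (by omega : 1 < ρ.card) c
  refine Set.eq_univ_of_forall (Fin.forall_fin_two.2 ⟨?_, ?_⟩)
  · exact ⟨(i, ρ), mem_vertexSet_chromSub_one.2 ⟨hi, subset_rfl⟩,
      pivotColoring_of_lt_card hic (show n - 2 < ρ.card by omega)⟩
  · exact ⟨(i, {i}), mem_vertexSet_chromSub_one.2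
      ⟨Finset.mem_singleton_self i, Finset.singleton_subset_iff.2 hi⟩,
      pivotColoring_of_card_le (by simp only [Finset.card_singleton]; omega)⟩

lemma exists_pivotColoring_ne (hn : 2 ≤ n) {ρ : Finset (Fin n)} {s : Finset (ChromV n 1)}
    (hs : s ∈ chromSub n ρ 1) (hcard : s.card = n) :
    ∃ u ∈ s, ∃ v ∈ s, pivotColoring c u ≠ pivotColoring c v := by
  have hcolors := image_fst_eq_univ_of_mem_chromSub_one hs hcard
  obtain ⟨u, hu, huc⟩ := Finset.mem_image.1 (hcolors ▸ Finset.mem_univ c)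
  have hrest : ((s.filter fun v => v.1 ≠ c).image Prod.fst) = Finset.univ.erase c := by
    rw [← Finset.filter_ne' Finset.univ c, ← hcolors, Finset.filter_image]
  have hrest_ne : (s.filter fun v => v.1 ≠ c).Nonempty := by
    rw [← Finset.image_nonempty (f := Prod.fst), hrest, ← Finset.card_pos,
      Finset.card_erase_of_mem (Finset.mem_univ c), Finset.card_univ, Fintype.card_fin]
    omega
  obtain ⟨w, hw, hsub⟩ :=
    exists_image_fst_subset_snd_of_mem_chromSub_one hs (Finset.filter_subset _ s) hrest_ne
  rw [hrest] at hsub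
  have hwcard : n - 1 ≤ w.2.card := by
    simpa [Finset.card_erase_of_mem] using Finset.card_le_card hsub
  obtain ⟨hws, hwc⟩ := Finset.mem_filter.1 hw
  refine ⟨u, hu, w, hws, ?_⟩
  rw [pivotColoring_of_fst_eq huc, pivotColoring_of_lt_card hwc (by omega)]
  decide

end ChromSubOne

/-- Lemma on binary colorings of the first chromatic subdivision. -/
theorem exists_binary_coloring_chromSub_one
    (n : ℕ) (hn : 3 ≤ n) :
    ∃ b : ChromV n 1 → Fin 2,
      (∀ ρ' : Finset (Fin n), ρ'.Nonempty → ρ'.card ≤ n - 2 →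
        colorSet b (chromSub n ρ' 1) = {1}) ∧
      (∀ ρ' : Finset (Fin n), ρ'.card = n - 1 →
        colorSet b (chromSub n ρ' 1) = Set.univ) ∧
      colorSet b (chromSub n Finset.univ 1) = Set.univ ∧
      (∀ s ∈ chromSub n Finset.univ 1, s.card = n → ∃ u ∈ s, ∃ v ∈ s, b u ≠ b v) := by
  have huniv : n - 1 ≤ (Finset.univ : Finset (Fin n)).card := by simp
  exact ⟨pivotColoring ⟨0, by omega⟩,
    fun ρ' hne hρ' => colorSet_pivotColoring_of_card_le hne hρ',
    fun ρ' hρ' => colorSet_pivotColoring_of_le_card hn hρ'.ge,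
    colorSet_pivotColoring_of_le_card hn huniv,
    fun s hs hcard => exists_pivotColoring_ne (by omega) hs hcard⟩
end

section
/- Consensus is not locally solvable: let n = 2, so σ = {0,1}, and let ℓ, m ≥ 1. Let val assign to each simplex of χ^ℓ(σ) a nonempty subset of {0,1} such that val(τ′) ⊆ val(τ) whenever τ′ ⊆ τ, val({v}) is a singleton for every vertex v of χ^ℓ(σ), val assigns {0} to the unique vertex of the subcomplex χ^ℓ({0}), and val assigns {1} to the unique vertex of the subcomplex χ^ℓ({1}). Then there exists an edge (1-simplex) τ ∈ χ^ℓ(σ) with val(τ) = {0,1} such that every coloring c of χ^{ℓ+m}(σ) with values in {0,1} that is consistent and complete with val contains an edge of χ^m(τ) whose two vertices receive different values under c. -/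
open scoped Classical

/-!
Both halves of the argument are a discrete intermediate value theorem: a two-valued function on
the vertices of a connected graph that takes both values changes value along some edge. The
1-skeleton of `χ^ℓ(σ)` is connected, and the singleton valencies are `0` and `1` at the two
corners, so some edge `{p, q}` has distinct singleton valencies and hence valency `{0, 1}`.
The 1-skeleton of `χ^m({p, q})` is connected too, and a complete coloring takes both values on
it, so it colors some edge of `χ^m({p, q})` bichromatically. Connectivity is inherited by
chromatic subdivisions: every vertex `(i, τ)` of `χ(K)` is joined to the corner `(i, {w})` of the
vertex `w ∈ τ` of color `i`, and the corners of the ends of an edge `{b, d}` of `K` are joined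
through `(col d, {b, d})` and `(col b, {b, d})`.
-/

namespace ChromaticComplex

open Finset

section

variable {α : Type} {n : ℕ}

def vertices (K : Set (Finset α)) : Set α := {v | ∃ s ∈ K, v ∈ s}

def IsDownClosed (K : Set (Finset α)) : Prop :=
  ∀ s ∈ K, ∀ t : Finset α, t.Nonempty → t ⊆ s → t ∈ K

def IsChromatic (col : α → Fin n) (K : Set (Finset α)) : Prop :=
  ∀ s ∈ K, Set.InjOn col s

lemma vertices_mono {K K' : Set (Finset α)} (h : K ⊆ K') : vertices K ⊆ vertices K' :=
  fun _ ⟨s, hs, hv⟩ => ⟨s, h hs, hv⟩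

lemma IsDownClosed.singleton_mem {K : Set (Finset α)} (hK : IsDownClosed K) {v : α}
    (hv : v ∈ vertices K) : {v} ∈ K := by
  obtain ⟨s, hs, hvs⟩ := hv
  exact hK s hs {v} (singleton_nonempty v) (singleton_subset_iff.2 hvs)

lemma isDownClosed_facesOf (τ : Finset α) : IsDownClosed (facesOf τ) :=
  fun _ hs _ ht hts => ⟨ht, hts.trans hs.2⟩

lemma IsChromatic.facesOf {col : α → Fin n} {K : Set (Finset α)} (hK : IsChromatic col K)
    {τ : Finset α} (hτ : τ ∈ K) : IsChromatic col (facesOf τ) :=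
  fun _ hs => (hK τ hτ).mono (coe_subset.2 hs.2)

lemma isDownClosed_subdiv (col : α → Fin n) (K : Set (Finset α)) :
    IsDownClosed (subdiv col K) := by
  rintro s ⟨-, h₁, h₂, h₃, h₄⟩ t ht hts
  exact ⟨ht, fun v hv => h₁ v (hts hv), fun u hu v hv => h₂ u (hts hu) v (hts hv),
    fun u hu v hv => h₃ u (hts hu) v (hts hv), fun u hu v hv => h₄ u (hts hu) v (hts hv)⟩

lemma isChromatic_subdiv (col : α → Fin n) (K : Set (Finset α)) :
    IsChromatic Prod.fst (subdiv col K) :=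
  fun _ hs u hu v hv h => by_contra fun huv => hs.2.2.1 u hu v hv huv h

lemma subdiv_mono {col : α → Fin n} {K K' : Set (Finset α)} (h : K ⊆ K') :
    subdiv col K ⊆ subdiv col K' := by
  rintro s ⟨h₀, h₁, h₂, h₃, h₄⟩
  exact ⟨h₀, fun v hv => ⟨h (h₁ v hv).1, (h₁ v hv).2⟩, h₂, h₃, h₄⟩

lemma singleton_mem_subdiv {col : α → Fin n} {K : Set (Finset α)} {τ : Finset α} {i : Fin n}
    (hτ : τ ∈ K) (hi : i ∈ τ.image col) : {(i, τ)} ∈ subdiv col K := by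
  simp_all [subdiv]

lemma mem_vertices_subdiv {col : α → Fin n} {K : Set (Finset α)} {v : Fin n × Finset α} :
    v ∈ vertices (subdiv col K) ↔ v.2 ∈ K ∧ v.1 ∈ v.2.image col :=
  ⟨fun ⟨_, ⟨_, h, _⟩, hv⟩ => h v hv,
    fun ⟨hK, hi⟩ => ⟨{v}, singleton_mem_subdiv hK hi, mem_singleton_self v⟩⟩

lemma IsDownClosed.vertices_subdiv_nonempty {col : α → Fin n} {K : Set (Finset α)}
    (hK : IsDownClosed K) (h : (vertices K).Nonempty) : (vertices (subdiv col K)).Nonempty :=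
  let ⟨v, hv⟩ := h
  ⟨(col v, {v}), mem_vertices_subdiv.2 ⟨hK.singleton_mem hv, by simp⟩⟩

end

section

variable {α β : Type} {n : ℕ} [DecidableEq α]

def skeleton (K : Set (Finset α)) : SimpleGraph α :=
  SimpleGraph.fromRel fun u v => ({u, v} : Finset α) ∈ K

def Connected (K : Set (Finset α)) : Prop :=
  ∀ u ∈ vertices K, ∀ v ∈ vertices K, (skeleton K).Reachable u v

lemma skeleton_adj {K : Set (Finset α)} {u v : α} :
    (skeleton K).Adj u v ↔ u ≠ v ∧ ({u, v} : Finset α) ∈ K := by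
  rw [skeleton, SimpleGraph.fromRel_adj, pair_comm v u, or_self]

lemma Connected.exists_edge_ne {K : Set (Finset α)} (hK : Connected K) (c : α → β) {x y : α}
    (hx : x ∈ vertices K) (hy : y ∈ vertices K) (hxy : c x ≠ c y) :
    ∃ p q, p ≠ q ∧ ({p, q} : Finset α) ∈ K ∧ c p ≠ c q := by
  obtain ⟨w⟩ := hK x hx y hy
  obtain ⟨d, -, hd₁, hd₂⟩ := w.exists_boundary_dart {v | c v = c x} rfl (Ne.symm hxy)
  obtain ⟨hne, hmem⟩ := skeleton_adj.1 d.adj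
  exact ⟨d.fst, d.snd, hne, hmem, fun h => hd₂ (h.symm.trans hd₁)⟩

lemma connected_facesOf (τ : Finset α) : Connected (facesOf τ) := by
  rintro u ⟨s, hs, hus⟩ v ⟨t, ht, hvt⟩
  by_cases huv : u = v
  · exact huv ▸ SimpleGraph.Reachable.refl u
  · exact ((skeleton_adj (K := facesOf τ)).2 ⟨huv, insert_nonempty _ _,
      insert_subset_iff.2 ⟨hs.2 hus, singleton_subset_iff.2 (ht.2 hvt)⟩⟩).reachable

lemma pair_mem_subdiv {col : α → Fin n} {K : Set (Finset α)} {τ τ' : Finset α} {i j : Fin n}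
    (hτ : τ ∈ K) (hτ' : τ' ∈ K) (hi : i ∈ τ.image col) (hj : j ∈ τ'.image col) (hij : i ≠ j)
    (hsub : τ ⊆ τ') (hsub' : j ∈ τ.image col → τ' ⊆ τ) :
    {(i, τ), (j, τ')} ∈ subdiv col K := by
  refine ⟨insert_nonempty _ _, ?_, ?_, ?_, ?_⟩ <;> simp only [forall_mem_insert, mem_singleton,
    forall_eq] <;> grind

lemma skeleton_subdiv_adj_of_mem {col : α → Fin n} {K : Set (Finset α)} {τ : Finset α}
    {i j : Fin n} (hτ : τ ∈ K) (hi : i ∈ τ.image col) (hj : j ∈ τ.image col) (hij : i ≠ j) :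
    (skeleton (subdiv col K)).Adj (i, τ) (j, τ) :=
  skeleton_adj.2 ⟨fun h => hij (congrArg Prod.fst h),
    pair_mem_subdiv hτ hτ hi hj hij subset_rfl fun _ => subset_rfl⟩

lemma skeleton_subdiv_adj_corner {col : α → Fin n} {K : Set (Finset α)} (hK : IsDownClosed K)
    {τ : Finset α} {w : α} {j : Fin n} (hτ : τ ∈ K) (hw : w ∈ τ) (hj : j ∈ τ.image col)
    (hwj : col w ≠ j) : (skeleton (subdiv col K)).Adj (col w, {w}) (j, τ) :=
  skeleton_adj.2 ⟨fun h => hwj (congrArg Prod.fst h),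
    pair_mem_subdiv (hK τ hτ _ (singleton_nonempty w) (singleton_subset_iff.2 hw)) hτ
      (by simp) hj hwj (singleton_subset_iff.2 hw) (by simp [Ne.symm hwj])⟩

lemma reachable_corner_subdiv {col : α → Fin n} {K : Set (Finset α)} (hK : IsDownClosed K)
    (hc : IsChromatic col K) {v : Fin n × Finset α} (hv : v ∈ vertices (subdiv col K))
    {w : α} (hw : w ∈ v.2) (hwv : col w = v.1) :
    (skeleton (subdiv col K)).Reachable (col w, {w}) v := by
  obtain ⟨hvK, hvi⟩ := mem_vertices_subdiv.1 hv
  by_cases hone : ∀ j ∈ v.2.image col, j = v.1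
  · have hv₂ : v.2 = {w} := eq_singleton_iff_unique_mem.2 ⟨hw, fun x hx =>
      hc _ hvK hx hw ((hone _ (mem_image_of_mem col hx)).trans hwv.symm)⟩
    rw [hwv, ← hv₂]
  · push Not at hone
    obtain ⟨j, hj, hjv⟩ := hone
    exact (skeleton_subdiv_adj_corner hK hvK hw hj (hwv ▸ hjv.symm)).reachable.trans
      (skeleton_subdiv_adj_of_mem hvK hj hvi hjv).reachable

lemma reachable_corners_subdiv {col : α → Fin n} {K : Set (Finset α)} (hK : IsDownClosed K)
    (hc : IsChromatic col K) {b d : α} (hbd : (skeleton K).Adj b d) :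
    (skeleton (subdiv col K)).Reachable (col b, {b}) (col d, {d}) := by
  obtain ⟨hne, he⟩ := skeleton_adj.1 hbd
  have hb : b ∈ ({b, d} : Finset α) := mem_insert_self b {d}
  have hd : d ∈ ({b, d} : Finset α) := mem_insert_of_mem (mem_singleton_self d)
  have hcol : col b ≠ col d := fun h => hne (hc _ he hb hd h)
  have e₁ := skeleton_subdiv_adj_corner hK he hb (mem_image_of_mem col hd) hcol
  have e₂ := skeleton_subdiv_adj_of_mem he (mem_image_of_mem col hd) (mem_image_of_mem col hb)
    hcol.symm
  have e₃ := skeleton_subdiv_adj_corner hK he hd (mem_image_of_mem col hb) hcol.symm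
  exact e₁.reachable.trans (e₂.reachable.trans e₃.symm.reachable)

lemma IsDownClosed.connected_subdiv {col : α → Fin n} {K : Set (Finset α)}
    (hK : IsDownClosed K) (hc : IsChromatic col K) (hconn : Connected K) :
    Connected (subdiv col K) := by
  have corners : ∀ {b d : α}, (skeleton K).Reachable b d →
      (skeleton (subdiv col K)).Reachable (col b, {b}) (col d, {d}) := by
    intro b d h
    rw [SimpleGraph.reachable_iff_reflTransGen] at h ⊢
    exact h.lift' (fun w => (col w, ({w} : Finset α))) fun _ _ hbd =>
      (SimpleGraph.reachable_iff_reflTransGen _ _).1 (reachable_corners_subdiv hK hc hbd)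
  intro u hu v hv
  obtain ⟨a, ha, hau⟩ := mem_image.1 (mem_vertices_subdiv.1 hu).2
  obtain ⟨b, hb, hbv⟩ := mem_image.1 (mem_vertices_subdiv.1 hv).2
  have hab := hconn a ⟨u.2, (mem_vertices_subdiv.1 hu).1, ha⟩ b
    ⟨v.2, (mem_vertices_subdiv.1 hv).1, hb⟩
  exact (reachable_corner_subdiv hK hc hu ha hau).symm.trans
    ((corners hab).trans (reachable_corner_subdiv hK hc hv hb hbv))

end

variable {n : ℕ}

lemma isDownClosed_chromSub (ρ : Finset (Fin n)) : ∀ ℓ, IsDownClosed (chromSub n ρ ℓ)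
  | 0 => isDownClosed_facesOf ρ
  | ℓ + 1 => isDownClosed_subdiv (chromCol n ℓ) (chromSub n ρ ℓ)

lemma isChromatic_chromSub (ρ : Finset (Fin n)) :
    ∀ ℓ, IsChromatic (chromCol n ℓ) (chromSub n ρ ℓ)
  | 0 => fun _ _ _ _ _ _ h => h
  | ℓ + 1 => isChromatic_subdiv (chromCol n ℓ) (chromSub n ρ ℓ)

lemma chromSub_mono {ρ ρ' : Finset (Fin n)} (h : ρ ⊆ ρ') :
    ∀ ℓ, chromSub n ρ ℓ ⊆ chromSub n ρ' ℓ
  | 0 => fun _ hs => ⟨hs.1, hs.2.trans h⟩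
  | ℓ + 1 => subdiv_mono (chromSub_mono h ℓ)

lemma vertices_chromSub_nonempty {ρ : Finset (Fin n)} (hρ : ρ.Nonempty) :
    ∀ ℓ, (vertices (chromSub n ρ ℓ)).Nonempty
  | 0 => let ⟨i, hi⟩ := hρ; ⟨i, ρ, ⟨hρ, subset_rfl⟩, hi⟩
  | ℓ + 1 => (isDownClosed_chromSub ρ ℓ).vertices_subdiv_nonempty (vertices_chromSub_nonempty hρ ℓ)

lemma connected_chromSub (ρ : Finset (Fin n)) : ∀ ℓ, Connected (chromSub n ρ ℓ)
  | 0 => connected_facesOf ρ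
  | ℓ + 1 => (isDownClosed_chromSub ρ ℓ).connected_subdiv (isChromatic_chromSub ρ ℓ)
      (connected_chromSub ρ ℓ)

section

variable {ℓ : ℕ} {K : Set (Finset (ChromV n ℓ))}

lemma IsDownClosed.iterSub (hK : IsDownClosed K) : ∀ m, IsDownClosed (iterSub n ℓ m K)
  | 0 => hK
  | _ + 1 => isDownClosed_subdiv _ _

lemma IsChromatic.iterSub (hc : IsChromatic (chromCol n ℓ) K) :
    ∀ m, IsChromatic (chromCol n (ℓ + m)) (iterSub n ℓ m K)
  | 0 => hc
  | _ + 1 => isChromatic_subdiv _ _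

lemma Connected.iterSub (hK : IsDownClosed K) (hc : IsChromatic (chromCol n ℓ) K)
    (hconn : Connected K) : ∀ m, Connected (iterSub n ℓ m K)
  | 0 => hconn
  | m + 1 => (hK.iterSub m).connected_subdiv (hc.iterSub m) (hconn.iterSub hK hc m)

lemma connected_subOf {ρ : Finset (Fin n)} {τ : Finset (ChromV n ℓ)} (hτ : τ ∈ chromSub n ρ ℓ)
    (m : ℕ) : Connected (subOf m τ) :=
  (connected_facesOf τ).iterSub (isDownClosed_facesOf τ)
    ((isChromatic_chromSub ρ ℓ).facesOf hτ) m

end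

lemma eq_zero_one_of_mem {S : Set (Fin 2)} {x y : Fin 2} (hxy : x ≠ y) (hx : x ∈ S)
    (hy : y ∈ S) : S = {0, 1} := by
  refine Set.eq_of_subset_of_subset (fun z _ => by fin_cases z <;> simp) ?_
  rintro z (rfl | rfl) <;> fin_cases x <;> fin_cases y <;> simp_all

lemma val_pair_eq_zero_one {α : Type} [DecidableEq α] {K : Set (Finset α)}
    (hK : IsDownClosed K) {val : Finset α → Set (Fin 2)}
    (hmono : ∀ τ' ∈ K, ∀ τ ∈ K, τ' ⊆ τ → val τ' ⊆ val τ)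
    (hsingle : ∀ v ∈ vertices K, ∃ x, val {v} = {x}) {p q : α} (hpq : ({p, q} : Finset α) ∈ K)
    (hval : val {p} ≠ val {q}) : val {p, q} = {0, 1} := by
  have hp : p ∈ vertices K := ⟨_, hpq, mem_insert_self p {q}⟩
  have hq : q ∈ vertices K := ⟨_, hpq, mem_insert_of_mem (mem_singleton_self q)⟩
  obtain ⟨x, hx⟩ := hsingle p hp
  obtain ⟨y, hy⟩ := hsingle q hq
  have hsub : ∀ v ∈ vertices K, v ∈ ({p, q} : Finset α) → val {v} ⊆ val {p, q} :=
    fun v hv hvpq => hmono _ (hK.singleton_mem hv) _ hpq (singleton_subset_iff.2 hvpq)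
  refine eq_zero_one_of_mem (x := x) (y := y) (fun h => hval (by rw [hx, hy, h])) ?_ ?_
  · exact hsub p hp (mem_insert_self p {q}) (hx ▸ Set.mem_singleton x)
  · exact hsub q hq (mem_insert_of_mem (mem_singleton_self q)) (hy ▸ Set.mem_singleton y)

end ChromaticComplex

open ChromaticComplex Finset

theorem consensus_not_locally_solvable_general
    (ℓ m : ℕ)
    (val : Finset (ChromV 2 ℓ) → Set (Fin 2))
    (hmono : ∀ τ' ∈ chromSub 2 Finset.univ ℓ, ∀ τ ∈ chromSub 2 Finset.univ ℓ,
      τ' ⊆ τ → val τ' ⊆ val τ)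
    (hsingle : ∀ v ∈ vertexSet (chromSub 2 Finset.univ ℓ), ∃ x, val {v} = {x})
    (h0 : ∀ v ∈ vertexSet (chromSub 2 ({0} : Finset (Fin 2)) ℓ), val {v} = {0})
    (h1 : ∀ v ∈ vertexSet (chromSub 2 ({1} : Finset (Fin 2)) ℓ), val {v} = {1}) :
    ∃ τ ∈ chromSub 2 Finset.univ ℓ, τ.card = 2 ∧ val τ = {0, 1} ∧
      ∀ c : ChromV 2 (ℓ + m) → Fin 2,
        (∀ τ' ∈ chromSub 2 Finset.univ ℓ, colorSet c (subOf m τ') ⊆ val τ') →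
        (∀ τ' ∈ chromSub 2 Finset.univ ℓ, colorSet c (subOf m τ') = val τ') →
        ∃ s ∈ subOf m τ, s.card = 2 ∧ ∃ u ∈ s, ∃ v ∈ s, c u ≠ c v := by
  obtain ⟨u₀, hu₀⟩ := vertices_chromSub_nonempty (singleton_nonempty (0 : Fin 2)) ℓ
  obtain ⟨u₁, hu₁⟩ := vertices_chromSub_nonempty (singleton_nonempty (1 : Fin 2)) ℓ
  obtain ⟨p, q, hpq, hedge, hval⟩ := (connected_chromSub univ ℓ).exists_edge_ne
    (fun v => val {v}) (vertices_mono (chromSub_mono (subset_univ _) ℓ) hu₀)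
    (vertices_mono (chromSub_mono (subset_univ _) ℓ) hu₁) (by simp [h0 u₀ hu₀, h1 u₁ hu₁])
  have hval_pq := val_pair_eq_zero_one (isDownClosed_chromSub univ ℓ) hmono hsingle hedge hval
  refine ⟨{p, q}, hedge, card_pair hpq, hval_pq, fun c _ hcomplete => ?_⟩
  have hcolors : colorSet c (subOf m {p, q}) = {0, 1} := hval_pq ▸ hcomplete _ hedge
  obtain ⟨x₀, hx₀, hc₀⟩ : (0 : Fin 2) ∈ colorSet c (subOf m {p, q}) := by simp [hcolors]
  obtain ⟨x₁, hx₁, hc₁⟩ : (1 : Fin 2) ∈ colorSet c (subOf m {p, q}) := by simp [hcolors]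
  obtain ⟨a, b, hab, hs, hcab⟩ :=
    (connected_subOf hedge m).exists_edge_ne c hx₀ hx₁ (by simp [hc₀, hc₁])
  exact ⟨{a, b}, hs, card_pair hab, a, mem_insert_self a {b}, b,
    mem_insert_of_mem (mem_singleton_self b), hcab⟩

/-- Consensus is not locally solvable (n = 2). -/
theorem consensus_not_locally_solvable
    (ℓ m : ℕ) (hℓ : 1 ≤ ℓ) (hm : 1 ≤ m)
    (val : Finset (ChromV 2 ℓ) → Set (Fin 2))
    (hne : ∀ τ ∈ chromSub 2 Finset.univ ℓ, (val τ).Nonempty)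
    (hmono : ∀ τ' ∈ chromSub 2 Finset.univ ℓ, ∀ τ ∈ chromSub 2 Finset.univ ℓ,
      τ' ⊆ τ → val τ' ⊆ val τ)
    (hsingle : ∀ v ∈ vertexSet (chromSub 2 Finset.univ ℓ), ∃ x, val {v} = {x})
    (h0 : ∀ v ∈ vertexSet (chromSub 2 ({0} : Finset (Fin 2)) ℓ), val {v} = {0})
    (h1 : ∀ v ∈ vertexSet (chromSub 2 ({1} : Finset (Fin 2)) ℓ), val {v} = {1}) :
    ∃ τ ∈ chromSub 2 Finset.univ ℓ, τ.card = 2 ∧ val τ = {0, 1} ∧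
      ∀ c : ChromV 2 (ℓ + m) → Fin 2,
        (∀ τ' ∈ chromSub 2 Finset.univ ℓ, colorSet c (subOf m τ') ⊆ val τ') →
        (∀ τ' ∈ chromSub 2 Finset.univ ℓ, colorSet c (subOf m τ') = val τ') →
        ∃ s ∈ subOf m τ, s.card = 2 ∧ ∃ u ∈ s, ∃ v ∈ s, c u ≠ c v :=
  consensus_not_locally_solvable_general ℓ m val hmono hsingle h0 h1
end
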